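/- For a nonempty compact set A in ℝⁿ and a linear functional v, the value max_{f ∈ argmax_{g∈A} v·g} u·f is equal to the corresponding value for the convex hull of A: max over v-maximizers of co(A) of u·f equals max over v-maximizers of A of u·f. -/

import Mathlib

/-!
A maximizer `x` of a linear functional `φ` over `convexHull s` is a convex combination of points
of `s`, all with `φ`-value at most `φ x`; since `φ x` is the weighted average of these values, every
point carrying positive weight attains it, so `x` lies in the convex hull of the maximizers over
`s`. Conversely the maximizers over `s` still maximize over the hull. So the `v`-maximizers of
`co(A)` are the convex hull of the `v`-maximizers of `A`, and by the maximum principle every value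
of `u` on a convex hull is dominated by a value on the set itself. Mutual domination makes the two
suprema agree even where `sSup` takes its junk value (empty or unbounded sets).
-/

variable {𝕜 E β ι : Type*}

def maximizers [LE β] (f : E → β) (s : Set E) : Set E :=
  {x ∈ s | ∀ y ∈ s, f y ≤ f x}

theorem LinearMap.map_centerMass_of_sum_eq_one [Field 𝕜] [AddCommGroup E] [Module 𝕜 E]
    (φ : E →ₗ[𝕜] 𝕜) {t : Finset ι} {w : ι → 𝕜} (hw₁ : ∑ i ∈ t, w i = 1) (z : ι → E) :
    φ (t.centerMass w z) = ∑ i ∈ t, w i * φ (z i) := by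
  simp only [Finset.centerMass_eq_of_sum_1 _ _ hw₁, map_sum, map_smul, smul_eq_mul]

section LinearOrderedField

variable [Field 𝕜] [LinearOrder 𝕜] [IsStrictOrderedRing 𝕜]

theorem Finset.eq_of_sum_mul_eq_of_forall_le {t : Finset ι} {w a : ι → 𝕜} {M : 𝕜}
    (hw₀ : ∀ i ∈ t, 0 ≤ w i) (hw₁ : ∑ i ∈ t, w i = 1) (ha : ∀ i ∈ t, a i ≤ M)
    (hsum : ∑ i ∈ t, w i * a i = M) {i : ι} (hi : i ∈ t) (hwi : w i ≠ 0) : a i = M := by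
  have hle : ∀ j ∈ t, w j * a j ≤ w j * M := fun j hj =>
    mul_le_mul_of_nonneg_left (ha j hj) (hw₀ j hj)
  have heq : ∑ j ∈ t, w j * a j = ∑ j ∈ t, w j * M := by rw [← Finset.sum_mul, hw₁, one_mul, hsum]
  exact mul_left_cancel₀ hwi ((Finset.sum_eq_sum_iff_of_le hle).1 heq i hi)

variable [AddCommGroup E] [Module 𝕜 E]

theorem LinearMap.maximizers_subset_maximizers_convexHull (φ : E →ₗ[𝕜] 𝕜) (s : Set E) :
    maximizers φ s ⊆ maximizers φ (convexHull 𝕜 s) := fun x ⟨hxs, hx⟩ =>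
  ⟨subset_convexHull 𝕜 s hxs, fun _ hy =>
    convexHull_min hx (convex_halfSpace_le φ.isLinear (φ x)) hy⟩

theorem LinearMap.convex_maximizers_convexHull (φ : E →ₗ[𝕜] 𝕜) (s : Set E) :
    Convex 𝕜 (maximizers φ (convexHull 𝕜 s)) := by
  have hinter : maximizers φ (convexHull 𝕜 s) =
      convexHull 𝕜 s ∩ ⋂ y ∈ convexHull 𝕜 s, {x | φ y ≤ φ x} := by
    ext x
    simp [maximizers]
  rw [hinter]
  exact (convex_convexHull 𝕜 s).inter
    (convex_iInter₂ fun y _ => convex_halfSpace_ge φ.isLinear (φ y))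

theorem LinearMap.maximizers_convexHull_subset (φ : E →ₗ[𝕜] 𝕜) (s : Set E) :
    maximizers φ (convexHull 𝕜 s) ⊆ convexHull 𝕜 (maximizers φ s) := by
  classical
  rintro x ⟨hx, hxmax⟩
  obtain ⟨ι, t, w, z, hw₀, hw₁, hz, rfl⟩ := (convexHull_eq s).subset hx
  have hφx := φ.map_centerMass_of_sum_eq_one hw₁ z
  rw [← Finset.centerMass_filter_ne_zero]
  refine Finset.centerMass_mem_convexHull _ (fun i hi => hw₀ i (Finset.mem_filter.1 hi).1)
    (by rw [Finset.sum_filter_ne_zero, hw₁]; exact one_pos) fun i hi => ?_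
  obtain ⟨hit, hwi⟩ := Finset.mem_filter.1 hi
  have hzi : φ (z i) = φ (t.centerMass w z) :=
    Finset.eq_of_sum_mul_eq_of_forall_le hw₀ hw₁
      (fun j hj => hxmax _ (subset_convexHull 𝕜 s (hz j hj))) hφx.symm hit hwi
  exact ⟨hz i hit, fun y hy => hzi ▸ hxmax y (subset_convexHull 𝕜 s hy)⟩

theorem LinearMap.maximizers_convexHull (φ : E →ₗ[𝕜] 𝕜) (s : Set E) :
    maximizers φ (convexHull 𝕜 s) = convexHull 𝕜 (maximizers φ s) :=
  (φ.maximizers_convexHull_subset s).antisymm <|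
    convexHull_min (φ.maximizers_subset_maximizers_convexHull s) (φ.convex_maximizers_convexHull s)

theorem ConvexOn.sSup_image_convexHull [ConditionallyCompleteLinearOrder β] [AddCommGroup β]
    [IsOrderedAddMonoid β] [Module 𝕜 β] [IsStrictOrderedModule 𝕜 β] {f : E → β} {s : Set E}
    (hf : ConvexOn 𝕜 (convexHull 𝕜 s) f) :
    sSup (f '' convexHull 𝕜 s) = sSup (f '' s) :=
  csSup_eq_csSup_of_forall_exists_le
    (Set.forall_mem_image.2 fun _ hx =>
      let ⟨y, hy, hxy⟩ := hf.exists_ge_of_mem_convexHull (subset_convexHull 𝕜 s) hx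
      ⟨f y, Set.mem_image_of_mem f hy, hxy⟩)
    (Set.forall_mem_image.2 fun y hy =>
      ⟨f y, Set.mem_image_of_mem f (subset_convexHull 𝕜 s hy), le_rfl⟩)

end LinearOrderedField

theorem stmt_2_general {n : ℕ} (A : Set (Fin n → ℝ))
    (u v : Fin n → ℝ) :
    sSup ((fun f => ∑ i, u i * f i) ''
        {f ∈ convexHull ℝ A | ∀ g ∈ convexHull ℝ A, ∑ i, v i * g i ≤ ∑ i, v i * f i})
      = sSup ((fun f => ∑ i, u i * f i) ''
        {f ∈ A | ∀ g ∈ A, ∑ i, v i * g i ≤ ∑ i, v i * f i}) := by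
  let φ : (Fin n → ℝ) →ₗ[ℝ] ℝ := dotProductBilin ℝ ℝ v
  let ψ : (Fin n → ℝ) →ₗ[ℝ] ℝ := dotProductBilin ℝ ℝ u
  change sSup (ψ '' maximizers φ (convexHull ℝ A)) = sSup (ψ '' maximizers φ A)
  rw [φ.maximizers_convexHull, (ψ.convexOn (convex_convexHull ℝ _)).sSup_image_convexHull]

/-- The Strotz value of a menu equals that of its convex hull:
`max_{f ∈ argmax_{g ∈ co(A)} v·g} u·f = max_{f ∈ argmax_{g ∈ A} v·g} u·f`. -/
theorem stmt_2 {n : ℕ} (A : Set (Fin n → ℝ)) (hne : A.Nonempty) (hA : IsCompact A)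
    (u v : Fin n → ℝ) :
    sSup ((fun f => ∑ i, u i * f i) ''
        {f ∈ convexHull ℝ A | ∀ g ∈ convexHull ℝ A, ∑ i, v i * g i ≤ ∑ i, v i * f i})
      = sSup ((fun f => ∑ i, u i * f i) ''
        {f ∈ A | ∀ g ∈ A, ∑ i, v i * g i ≤ ∑ i, v i * f i}) :=
  stmt_2_general A u v
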